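/- arXiv:2307.11241 — 4 statements merged into one kernel-verified Lean document; each statement's English description precedes it below -/
import Mathlib

section
/- Let p ≥ 1, let f : ℝ^p → ℝ be differentiable, let ρ_x : ℝ^p → ℝ be a nonnegative integrable density, let A be an invertible p × p real matrix and b ∈ ℝ^p. Define f̃ : ℝ^p → ℝ by f̃(z) = f(A⁻¹(z − b)) and ρ_z : ℝ^p → ℝ by ρ_z(z) = |det A|⁻¹ ρ_x(A⁻¹(z − b)). Assume that for all i, j the functions x ↦ (∂f/∂x_i)(x)(∂f/∂x_j)(x)ρ_x(x) are integrable on ℝ^p. Then C = Aᵀ C̃ A, where C is the C matrix of (f, ρ_x) and C̃ is the C matrix of (f̃, ρ_z). -/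
/-!
By the chain rule the gradient of `f̃` at `z` is `A⁻ᵀ ∇f(A⁻¹(z - b))`, so every entry of `C̃` is
the integral of a quadratic expression in `∇f` composed with the affine map `z ↦ A⁻¹(z - b)`.
Changing variables along that map produces the Jacobian factor `|det A|`, which cancels the
normalisation of `ρ_z`; hence `C̃ = A⁻ᵀ C A⁻¹`, i.e. `C = Aᵀ C̃ A`.
-/

open MeasureTheory Matrix

/-- The `i`-th partial derivative of `f` at `x`. -/
noncomputable def partialDeriv' {p : ℕ} (f : (Fin p → ℝ) → ℝ) (i : Fin p)
    (x : Fin p → ℝ) : ℝ :=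
  fderiv ℝ f x (Pi.single i 1)

/-- The `C` matrix of `(f, ρ)`: `C i j = ∫ ∂f/∂xᵢ ∂f/∂xⱼ ρ`. -/
noncomputable def Cmat {p : ℕ} (f : (Fin p → ℝ) → ℝ) (ρ : (Fin p → ℝ) → ℝ) :
    Matrix (Fin p) (Fin p) ℝ :=
  Matrix.of fun i j => ∫ x, partialDeriv' f i x * partialDeriv' f j x * ρ x

section AffineChangeOfVariables

variable {ι : Type*} [Fintype ι]

theorem hasFDerivAt_mulVec_sub (M : Matrix ι ι ℝ) (b z : ι → ℝ) :
    HasFDerivAt (fun z => M *ᵥ (z - b)) (LinearMap.toContinuousLinearMap M.mulVecLin) z := by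
  simpa [mulVec_sub] using
    (LinearMap.toContinuousLinearMap M.mulVecLin).hasFDerivAt.sub_const (M *ᵥ b)

theorem integral_eq_abs_det_mul_integral_comp_mulVec_sub [DecidableEq ι] {M : Matrix ι ι ℝ} (hM : M.det ≠ 0)
    (b : ι → ℝ) (F : (ι → ℝ) → ℝ) :
    ∫ x, F x = |M.det| * ∫ z, F (M *ᵥ (z - b)) := by
  have hM_unit : IsUnit M := (isUnit_iff_isUnit_det M).mpr hM.isUnit
  have hinj : Function.Injective fun z => M *ᵥ (z - b) :=
    (mulVec_injective_iff_isUnit.mpr hM_unit).comp (sub_left_injective (b := b))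
  have himage : (fun z => M *ᵥ (z - b)) '' Set.univ = Set.univ := by
    rw [Set.image_univ, Set.range_eq_univ]
    exact (mulVec_surjective_iff_isUnit.mpr hM_unit).comp
      fun y => ⟨y + b, add_sub_cancel_right y b⟩
  have := integral_image_eq_integral_abs_det_fderiv_smul volume MeasurableSet.univ
    (fun z _ => (hasFDerivAt_mulVec_sub M b z).hasFDerivWithinAt) hinj.injOn F
  simpa [himage, integral_const_mul, ← Matrix.toLin'_apply', LinearMap.det_toLin'] using this

end AffineChangeOfVariables

section CMatrix

variable {p : ℕ}

theorem fderiv_apply_eq_sum_mul_partialDeriv' (f : (Fin p → ℝ) → ℝ) (x v : Fin p → ℝ) :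
    fderiv ℝ f x v = ∑ k, v k * partialDeriv' f k x := by
  change (fderiv ℝ f x : (Fin p → ℝ) →ₗ[ℝ] ℝ) v = _
  rw [LinearMap.pi_apply_eq_sum_univ]
  refine Finset.sum_congr rfl fun k _ => ?_
  have hk : (fun j => if k = j then (1 : ℝ) else 0) = Pi.single k 1 := by
    ext j
    simp [Pi.single_apply, eq_comm]
  rw [hk, smul_eq_mul, partialDeriv']
  rfl

theorem partialDeriv'_comp_mulVec_sub {f : (Fin p → ℝ) → ℝ} (M : Matrix (Fin p) (Fin p) ℝ)
    (b z : Fin p → ℝ) (hf : DifferentiableAt ℝ f (M *ᵥ (z - b))) (i : Fin p) :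
    partialDeriv' (fun z => f (M *ᵥ (z - b))) i z = fderiv ℝ f (M *ᵥ (z - b)) (M.col i) := by
  have h : HasFDerivAt (fun z => f (M *ᵥ (z - b))) _ z :=
    hf.hasFDerivAt.comp z (hasFDerivAt_mulVec_sub M b z)
  rw [partialDeriv', h.fderiv]
  simp

theorem integral_fderiv_mul_fderiv_mul_eq_dotProduct_Cmat_mulVec {f ρ : (Fin p → ℝ) → ℝ}
    (hint : ∀ i j, Integrable (fun x => partialDeriv' f i x * partialDeriv' f j x * ρ x))
    (u v : Fin p → ℝ) :
    ∫ x, fderiv ℝ f x u * fderiv ℝ f x v * ρ x = u ⬝ᵥ (Cmat f ρ *ᵥ v) := by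
  have hexpand : ∀ x, fderiv ℝ f x u * fderiv ℝ f x v * ρ x =
      ∑ k, ∑ l, u k * v l * (partialDeriv' f k x * partialDeriv' f l x * ρ x) := by
    intro x
    rw [fderiv_apply_eq_sum_mul_partialDeriv', fderiv_apply_eq_sum_mul_partialDeriv',
      Finset.sum_mul_sum, Finset.sum_mul]
    simp_rw [Finset.sum_mul]
    exact Finset.sum_congr rfl fun k _ => Finset.sum_congr rfl fun l _ => by ring
  simp_rw [hexpand]
  rw [integral_finsetSum _ fun k _ => integrable_finsetSum _ fun l _ => (hint k l).const_mul _]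
  simp_rw [integral_finsetSum _ fun l _ => (hint _ l).const_mul _, integral_const_mul]
  simp only [dotProduct, mulVec, Cmat, of_apply, Finset.mul_sum]
  exact Finset.sum_congr rfl fun k _ => Finset.sum_congr rfl fun l _ => by ring

theorem Cmat_comp_mulVec_sub {f ρ : (Fin p → ℝ) → ℝ} (hf : Differentiable ℝ f)
    {M : Matrix (Fin p) (Fin p) ℝ} (hM : M.det ≠ 0) (b : Fin p → ℝ)
    (hint : ∀ i j, Integrable (fun x => partialDeriv' f i x * partialDeriv' f j x * ρ x)) :
    Cmat (fun z => f (M *ᵥ (z - b))) (fun z => |M.det| * ρ (M *ᵥ (z - b))) =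
      Mᵀ * Cmat f ρ * M := by
  ext i j
  set G : (Fin p → ℝ) → ℝ := fun y => fderiv ℝ f y (M.col i) * fderiv ℝ f y (M.col j) * ρ y
  calc Cmat (fun z => f (M *ᵥ (z - b))) (fun z => |M.det| * ρ (M *ᵥ (z - b))) i j
      = |M.det| * ∫ z, G (M *ᵥ (z - b)) := by
        simp only [Cmat, of_apply, partialDeriv'_comp_mulVec_sub M b _ (hf _), G]
        rw [← integral_const_mul]
        exact integral_congr_ae (Filter.Eventually.of_forall fun z => by ring)
    _ = M.col i ⬝ᵥ (Cmat f ρ *ᵥ M.col j) := by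
        rw [← integral_eq_abs_det_mul_integral_comp_mulVec_sub hM b G,
          integral_fderiv_mul_fderiv_mul_eq_dotProduct_Cmat_mulVec hint]
    _ = (Mᵀ * Cmat f ρ * M) i j := by
        simp only [dotProduct, mulVec, mul_apply, col_apply, transpose_apply, Finset.mul_sum,
          Finset.sum_mul]
        rw [Finset.sum_comm]
        exact Finset.sum_congr rfl fun k _ => Finset.sum_congr rfl fun l _ => by ring

end CMatrix

theorem C_linear_transform_general {p : ℕ}
    (f : (Fin p → ℝ) → ℝ) (hf : Differentiable ℝ f)
    (ρx : (Fin p → ℝ) → ℝ)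
    (A : Matrix (Fin p) (Fin p) ℝ) (hA : IsUnit A.det) (b : Fin p → ℝ)
    (ftil : (Fin p → ℝ) → ℝ) (hftil : ∀ z, ftil z = f (A⁻¹.mulVec (z - b)))
    (ρz : (Fin p → ℝ) → ℝ) (hρz : ∀ z, ρz z = |A.det|⁻¹ * ρx (A⁻¹.mulVec (z - b)))
    (hint : ∀ i j, Integrable (fun x => partialDeriv' f i x * partialDeriv' f j x * ρx x)) :
    Cmat f ρx = Aᵀ * Cmat ftil ρz * A := by
  have hdet_inv : A⁻¹.det = A.det⁻¹ := by rw [det_nonsing_inv, Ring.inverse_eq_inv']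
  have hftil' : ftil = fun z => f (A⁻¹ *ᵥ (z - b)) := funext hftil
  have hρz' : ρz = fun z => |A⁻¹.det| * ρx (A⁻¹ *ᵥ (z - b)) := by
    ext z
    rw [hρz, hdet_inv, abs_inv]
  have hAT : IsUnit Aᵀ.det := by rwa [det_transpose]
  rw [hftil', hρz', Cmat_comp_mulVec_sub hf (isUnit_nonsing_inv_det A hA).ne_zero b hint,
    transpose_nonsing_inv, Matrix.mul_assoc, Matrix.mul_assoc, nonsing_inv_mul _ hA,
    Matrix.mul_one, mul_nonsing_inv_cancel_left _ _ hAT]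

theorem C_linear_transform {p : ℕ} (hp : 1 ≤ p)
    (f : (Fin p → ℝ) → ℝ) (hf : Differentiable ℝ f)
    (ρx : (Fin p → ℝ) → ℝ) (hρ_nonneg : ∀ x, 0 ≤ ρx x) (hρ_int : Integrable ρx)
    (A : Matrix (Fin p) (Fin p) ℝ) (hA : IsUnit A.det) (b : Fin p → ℝ)
    (ftil : (Fin p → ℝ) → ℝ) (hftil : ∀ z, ftil z = f (A⁻¹.mulVec (z - b)))
    (ρz : (Fin p → ℝ) → ℝ) (hρz : ∀ z, ρz z = |A.det|⁻¹ * ρx (A⁻¹.mulVec (z - b)))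
    (hint : ∀ i j, Integrable (fun x => partialDeriv' f i x * partialDeriv' f j x * ρx x)) :
    Cmat f ρx = Aᵀ * Cmat ftil ρz * A :=
  C_linear_transform_general f hf ρx A hA b ftil hftil ρz hρz hint
end

section
/- Let p ≥ 1, let f : ℝ^p → ℝ be differentiable with measurable gradient, let ρ : ℝ^p → ℝ be nonnegative, measurable and integrable, assume for all i, j that x ↦ (∂f/∂x_i)(x)(∂f/∂x_j)(x)ρ(x) is integrable, and let C be the C matrix of (f, ρ). If w ∈ ℝ^p is a unit vector (‖w‖ = 1) and λ ∈ ℝ satisfies C w = λ w, then λ = ∫_{ℝ^p} ⟨w, ∇f(x)⟩² ρ(x) dx; moreover λ = 0 if and only if ⟨w, ∇f(x)⟩ = 0 for almost every x with respect to the measure with density ρ against Lebesgue measure (i.e. f is constant along the direction w, ρ-almost everywhere). -/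
open MeasureTheory Matrix

theorem eigenvalue_formula {p : ℕ} (hp : 1 ≤ p)
    (f : (Fin p → ℝ) → ℝ) (hf : Differentiable ℝ f)
    (hgrad_meas : ∀ i, Measurable (partialDeriv' f i))
    (ρ : (Fin p → ℝ) → ℝ) (hρ_nonneg : ∀ x, 0 ≤ ρ x) (hρ_meas : Measurable ρ)
    (hρ_int : Integrable ρ)
    (hint : ∀ i j, Integrable (fun x => partialDeriv' f i x * partialDeriv' f j x * ρ x))
    (w : Fin p → ℝ) (hw : ∑ i, w i ^ 2 = 1) (lam : ℝ)
    (heig : (Cmat f ρ).mulVec w = lam • w) :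
    lam = ∫ x, (∑ i, w i * partialDeriv' f i x) ^ 2 * ρ x ∧
    (lam = 0 ↔
      ∀ᵐ x ∂(volume.withDensity fun x => ENNReal.ofReal (ρ x)),
        ∑ i, w i * partialDeriv' f i x = 0) := by
  set s : (Fin p → ℝ) → ℝ := fun x => ∑ i, w i * partialDeriv' f i x with hs
  -- integrability of each cross term
  have hint' : ∀ i j : Fin p, Integrable
      (fun x => w i * partialDeriv' f i x * (w j * partialDeriv' f j x) * ρ x) := by
    intro i j
    have := (hint i j).const_mul (w i * w j)
    refine this.congr ?_
    filter_upwards with x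
    ring
  have hgeq : ∀ x, s x ^ 2 * ρ x =
      ∑ i, ∑ j, w i * partialDeriv' f i x * (w j * partialDeriv' f j x) * ρ x := by
    intro x
    rw [hs]
    rw [sq, Finset.sum_mul_sum, Finset.sum_mul]
    refine Finset.sum_congr rfl fun i _ => ?_
    rw [Finset.sum_mul]
  have hg_int : Integrable (fun x => s x ^ 2 * ρ x) := by
    have : Integrable (fun x => ∑ i, ∑ j,
        w i * partialDeriv' f i x * (w j * partialDeriv' f j x) * ρ x) :=
      integrable_finset_sum _ fun i _ => integrable_finset_sum _ fun j _ => hint' i j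
    exact this.congr (by filter_upwards with x using (hgeq x).symm)
  have h1 : lam = ∫ x, s x ^ 2 * ρ x := by
    have hl : lam = ∑ i, w i * ((Cmat f ρ).mulVec w i) := by
      rw [heig]
      simp only [Pi.smul_apply, smul_eq_mul]
      calc lam = lam * ∑ i, w i ^ 2 := by rw [hw, mul_one]
        _ = ∑ i, w i * (lam * w i) := by rw [Finset.mul_sum]; exact Finset.sum_congr rfl fun i _ => by ring
    rw [hl]
    have : ∀ i, w i * ((Cmat f ρ).mulVec w i) =
        ∑ j, ∫ x, w i * partialDeriv' f i x * (w j * partialDeriv' f j x) * ρ x := by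
      intro i
      rw [Matrix.mulVec, dotProduct, Finset.mul_sum]
      refine Finset.sum_congr rfl fun j _ => ?_
      show w i * ((∫ x, partialDeriv' f i x * partialDeriv' f j x * ρ x) * w j) = _
      rw [show w i * ((∫ x, partialDeriv' f i x * partialDeriv' f j x * ρ x) * w j)
          = w i * w j * ∫ x, partialDeriv' f i x * partialDeriv' f j x * ρ x by ring,
        ← integral_const_mul]
      exact integral_congr_ae (Filter.Eventually.of_forall fun x => by ring)
    rw [Finset.sum_congr rfl fun i _ => this i]
    rw [Finset.sum_congr rfl fun i _ =>
      (integral_finset_sum Finset.univ fun j _ => hint' i j).symm]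
    rw [← integral_finset_sum _ fun i _ =>
      integrable_finset_sum Finset.univ fun j _ => hint' i j]
    exact integral_congr_ae (by filter_upwards with x using (hgeq x).symm)
  refine ⟨h1, ?_⟩
  have hnonneg : ∀ x, 0 ≤ s x ^ 2 * ρ x := fun x => mul_nonneg (sq_nonneg _) (hρ_nonneg x)
  rw [h1, integral_eq_zero_iff_of_nonneg hnonneg hg_int]
  rw [ae_withDensity_iff hρ_meas.ennreal_ofReal]
  constructor
  · intro h
    filter_upwards [h] with x hx hρx
    have hρpos : 0 < ρ x := by
      rcases lt_or_eq_of_le (hρ_nonneg x) with h' | h'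
      · exact h'
      · exact absurd (by simp [← h']) hρx
    have : s x ^ 2 = 0 := by
      have := hx
      simp only [Pi.zero_apply] at this
      rcases mul_eq_zero.mp this with h'' | h''
      · exact h''
      · exact absurd h'' (ne_of_gt hρpos)
    exact pow_eq_zero_iff (by norm_num) |>.mp this
  · intro h
    filter_upwards [h] with x hx
    simp only [Pi.zero_apply]
    rcases eq_or_lt_of_le (hρ_nonneg x) with h' | h'
    · rw [← h', mul_zero]
    · have hsx : s x = 0 := hx (by simp [ENNReal.ofReal_eq_zero, not_le, h'])
      rw [hsx, zero_pow (by norm_num), zero_mul]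
end

section
/- Let p, M ≥ 1, let γ_1, …, γ_M ∈ ℝ, for each 1 ≤ i ≤ p and 1 ≤ m ≤ M let h_{im} : ℝ → ℝ be differentiable with measurable derivative, and let ρ_1, …, ρ_p : ℝ → ℝ be nonnegative measurable probability densities. Assume for every i, m that h_{im} and h'_{im} are square-integrable with respect to the measure with density ρ_i against Lebesgue measure. Define f(x) = γ_0 + Σ_{m=1}^M γ_m Π_{k=1}^p h_{km}(x_k) and ρ(x) = Π_{i=1}^p ρ_i(x_i). Then for each i, the diagonal entry of the C matrix of (f, ρ) satisfies C_{ii} = Σ_{m1=1}^M Σ_{m2=1}^M γ_{m1} γ_{m2} I_3^{(i)}[m1, m2] Π_{k ≠ i} I_2^{(k)}[m1, m2], where I_2^{(k)}[m1, m2] = ∫_ℝ h_{k m1}(x) h_{k m2}(x) ρ_k(x) dx and I_3^{(i)}[m1, m2] = ∫_ℝ h'_{i m1}(x) h'_{i m2}(x) ρ_i(x) dx. -/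
open MeasureTheory Matrix

/-!
Differentiating `f` in the `i`-th coordinate only hits the `i`-th factor of each product, so
`(∂ᵢf)² ρ` is a finite sum of functions of tensor form `x ↦ ∏ₖ Gₖ(xₖ)`, with `Gᵢ = h'h'ρᵢ` and
`Gₖ = hhρₖ` for `k ≠ i`. Each `Gₖ` is integrable by Cauchy–Schwarz in `L²(ρₖ dx)`, and Fubini
factorises the integral of a tensor-form function into the product of the one-dimensional integrals.
-/

theorem integrable_mul_mul_of_memLp_withDensity {α : Type*} [MeasurableSpace α] {μ : Measure α}
    {ρ : α → ℝ} (hρ_nonneg : ∀ x, 0 ≤ ρ x) (hρ_meas : Measurable ρ) {u v : α → ℝ}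
    (hu : MemLp u 2 (μ.withDensity fun x => ENNReal.ofReal (ρ x)))
    (hv : MemLp v 2 (μ.withDensity fun x => ENNReal.ofReal (ρ x))) :
    Integrable (fun x => u x * v x * ρ x) μ := by
  have huv : Integrable (u • v) (μ.withDensity fun x => ENNReal.ofReal (ρ x)) :=
    memLp_one_iff_integrable.mp (hv.smul hu (hpqr := ⟨by simp [ENNReal.inv_two_add_inv_two]⟩))
  rw [integrable_withDensity_iff hρ_meas.ennreal_ofReal
    (ae_of_all _ fun _ => ENNReal.ofReal_lt_top)] at huv
  simpa [ENNReal.toReal_ofReal (hρ_nonneg _)] using huv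

section Tensor

variable {ι : Type*} [Fintype ι] [DecidableEq ι]

theorem hasFDerivAt_prod_apply {g : ι → ℝ → ℝ} {x : ι → ℝ}
    (hg : ∀ k, DifferentiableAt ℝ (g k) (x k)) :
    HasFDerivAt (fun x : ι → ℝ => ∏ k, g k (x k))
      (∑ k, (∏ j ∈ Finset.univ.erase k, g j (x j)) •
        deriv (g k) (x k) • ContinuousLinearMap.proj (R := ℝ) (φ := fun _ : ι => ℝ) k) x :=
  HasFDerivAt.finsetProd fun k _ => (hg k).hasDerivAt.comp_hasFDerivAt x
    (ContinuousLinearMap.proj (R := ℝ) (φ := fun _ : ι => ℝ) k).hasFDerivAt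

theorem prod_apply_update_eq_mul_prod_erase {β M : Type*} [CommMonoid M] (F : ι → β → M)
    (i : ι) (a : β) (b : ι → β) :
    ∏ k, F k (Function.update b i a k) = F i a * ∏ k ∈ Finset.univ.erase i, F k (b k) := by
  simp_rw [Function.apply_update F]
  rw [Finset.prod_update_of_mem (Finset.mem_univ i), Finset.sdiff_singleton_eq_erase]

theorem integrable_mul_prod_erase {i : ι} {a : ℝ → ℝ} {b : ι → ℝ → ℝ} (ha : Integrable a)
    (hb : ∀ k, Integrable (b k)) :
    Integrable fun x : ι → ℝ => a (x i) * ∏ k ∈ Finset.univ.erase i, b k (x k) := by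
  refine (Integrable.fintype_prod (f := Function.update b i a) ?_).congr
    (ae_of_all _ fun x => prod_apply_update_eq_mul_prod_erase (fun k g => g (x k)) i a b)
  exact (Function.forall_update_iff b fun _ g => Integrable g).2 ⟨ha, fun k _ => hb k⟩

theorem integral_mul_prod_erase (i : ι) (a : ℝ → ℝ) (b : ι → ℝ → ℝ) :
    ∫ x : ι → ℝ, a (x i) * ∏ k ∈ Finset.univ.erase i, b k (x k) =
      (∫ t, a t) * ∏ k ∈ Finset.univ.erase i, ∫ t, b k t := by
  calc ∫ x : ι → ℝ, a (x i) * ∏ k ∈ Finset.univ.erase i, b k (x k)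
      = ∫ x : ι → ℝ, ∏ k, Function.update b i a k (x k) := integral_congr_ae <| ae_of_all _
        fun x => (prod_apply_update_eq_mul_prod_erase (fun k g => g (x k)) i a b).symm
    _ = ∏ k, ∫ t, Function.update b i a k t := integral_fintype_prod_volume_eq_prod _
    _ = _ := prod_apply_update_eq_mul_prod_erase (fun _ g => ∫ t, g t) i a b

end Tensor

theorem partialDeriv'_sum_mul_prod {p M : ℕ} {γ0 : ℝ} {γ : Fin M → ℝ}
    {h : Fin p → Fin M → ℝ → ℝ} (hh : ∀ k m, Differentiable ℝ (h k m))
    {f : (Fin p → ℝ) → ℝ} (hfdef : ∀ x, f x = γ0 + ∑ m, γ m * ∏ k, h k m (x k))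
    (i : Fin p) (x : Fin p → ℝ) :
    partialDeriv' f i x =
      ∑ m, γ m * (deriv (h i m) (x i) * ∏ k ∈ Finset.univ.erase i, h k m (x k)) := by
  have hf : HasFDerivAt f (∑ m, γ m • ∑ k, (∏ j ∈ Finset.univ.erase k, h j m (x j)) •
      deriv (h k m) (x k) • ContinuousLinearMap.proj (R := ℝ) (φ := fun _ : Fin p => ℝ) k) x := by
    rw [funext hfdef]
    exact (HasFDerivAt.fun_sum fun m _ =>
      (hasFDerivAt_prod_apply fun k => (hh k m).differentiableAt).const_mul (γ m)).const_add γ0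
  simp [partialDeriv', hf.fderiv, Pi.single_apply, mul_comm]

theorem Cmat_diagonal_tensor_general {p M : ℕ}
    (γ0 : ℝ) (γ : Fin M → ℝ) (h : Fin p → Fin M → ℝ → ℝ)
    (hh : ∀ i m, Differentiable ℝ (h i m))
    (ρ : Fin p → ℝ → ℝ) (hρ_nonneg : ∀ i x, 0 ≤ ρ i x)
    (hρ_meas : ∀ i, Measurable (ρ i))
    (hsq : ∀ i m, MemLp (h i m) 2 (volume.withDensity fun x => ENNReal.ofReal (ρ i x)))
    (hsq' : ∀ i m,
      MemLp (deriv (h i m)) 2 (volume.withDensity fun x => ENNReal.ofReal (ρ i x)))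
    (f : (Fin p → ℝ) → ℝ)
    (hfdef : ∀ x, f x = γ0 + ∑ m, γ m * ∏ k, h k m (x k))
    (ρprod : (Fin p → ℝ) → ℝ) (hρprod : ∀ x, ρprod x = ∏ i, ρ i (x i)) :
    ∀ i, Cmat f ρprod i i =
      ∑ m1, ∑ m2, γ m1 * γ m2 *
        (∫ x, deriv (h i m1) x * deriv (h i m2) x * ρ i x) *
        ∏ k ∈ Finset.univ.erase i, ∫ x, h k m1 x * h k m2 x * ρ k x := by
  intro i
  set a : Fin M → Fin M → ℝ → ℝ := fun m1 m2 t => deriv (h i m1) t * deriv (h i m2) t * ρ i t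
  set b : Fin M → Fin M → Fin p → ℝ → ℝ := fun m1 m2 k t => h k m1 t * h k m2 t * ρ k t
  have hpoint : ∀ x, partialDeriv' f i x * partialDeriv' f i x * ρprod x =
      ∑ m1, ∑ m2, γ m1 * γ m2 * (a m1 m2 (x i) * ∏ k ∈ Finset.univ.erase i, b m1 m2 k (x k)) := by
    intro x
    rw [partialDeriv'_sum_mul_prod hh hfdef, hρprod, Finset.sum_mul_sum, Finset.sum_mul,
      ← Finset.mul_prod_erase _ _ (Finset.mem_univ i)]
    refine Finset.sum_congr rfl fun m1 _ => ?_
    rw [Finset.sum_mul]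
    refine Finset.sum_congr rfl fun m2 _ => ?_
    simp only [a, b, Finset.prod_mul_distrib]
    ring
  have hint : ∀ m1 m2, Integrable fun x : Fin p → ℝ =>
      a m1 m2 (x i) * ∏ k ∈ Finset.univ.erase i, b m1 m2 k (x k) := fun m1 m2 =>
    integrable_mul_prod_erase
      (integrable_mul_mul_of_memLp_withDensity (hρ_nonneg i) (hρ_meas i) (hsq' i m1) (hsq' i m2))
      fun k =>
        integrable_mul_mul_of_memLp_withDensity (hρ_nonneg k) (hρ_meas k) (hsq k m1) (hsq k m2)
  rw [Cmat, of_apply, integral_congr_ae (ae_of_all _ hpoint),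
    integral_finsetSum _ fun m1 _ => integrable_finsetSum _ fun m2 _ => (hint m1 m2).const_mul _]
  refine Finset.sum_congr rfl fun m1 _ => ?_
  rw [integral_finsetSum _ fun m2 _ => (hint m1 m2).const_mul _]
  simp_rw [integral_const_mul, integral_mul_prod_erase, a, b, mul_assoc]

theorem Cmat_diagonal_tensor {p M : ℕ} (hp : 1 ≤ p) (hM : 1 ≤ M)
    (γ0 : ℝ) (γ : Fin M → ℝ) (h : Fin p → Fin M → ℝ → ℝ)
    (hh : ∀ i m, Differentiable ℝ (h i m))
    (hh' : ∀ i m, Measurable (deriv (h i m)))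
    (ρ : Fin p → ℝ → ℝ) (hρ_nonneg : ∀ i x, 0 ≤ ρ i x)
    (hρ_meas : ∀ i, Measurable (ρ i))
    (hρ_int : ∀ i, Integrable (ρ i)) (hρ_prob : ∀ i, ∫ x, ρ i x = 1)
    (hsq : ∀ i m, MemLp (h i m) 2 (volume.withDensity fun x => ENNReal.ofReal (ρ i x)))
    (hsq' : ∀ i m,
      MemLp (deriv (h i m)) 2 (volume.withDensity fun x => ENNReal.ofReal (ρ i x)))
    (f : (Fin p → ℝ) → ℝ)
    (hfdef : ∀ x, f x = γ0 + ∑ m, γ m * ∏ k, h k m (x k))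
    (ρprod : (Fin p → ℝ) → ℝ) (hρprod : ∀ x, ρprod x = ∏ i, ρ i (x i)) :
    ∀ i, Cmat f ρprod i i =
      ∑ m1, ∑ m2, γ m1 * γ m2 *
        (∫ x, deriv (h i m1) x * deriv (h i m2) x * ρ i x) *
        ∏ k ∈ Finset.univ.erase i, ∫ x, h k m1 x * h k m2 x * ρ k x :=
  Cmat_diagonal_tensor_general γ0 γ h hh ρ hρ_nonneg hρ_meas hsq hsq' f hfdef ρprod hρprod
end

section
/- Let p ≥ 1, let f : ℝ^p → ℝ be differentiable, let μ ∈ ℝ^p, let Σ be a symmetric positive definite p × p real matrix, and let A be a symmetric positive definite p × p real matrix with A² = Σ⁻¹ (so A = Σ^{−1/2}). Let ρ_x(x) = (2π)^{−p/2} (det Σ)^{−1/2} exp(−(x−μ)ᵀ Σ⁻¹ (x−μ)/2) be the N(μ, Σ) density and ρ_z(z) = (2π)^{−p/2} exp(−‖z‖²/2) the standard normal density on ℝ^p. Define f̃(z) = f(A⁻¹ z + μ), and assume that for all i, j the functions x ↦ (∂f/∂x_i)(x)(∂f/∂x_j)(x)ρ_x(x) are integrable. Then the C matrix of (f, ρ_x)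 satisfies C = Aᵀ C_z A, where C_z is the C matrix of (f̃, ρ_z). -/
/-!
Substitute `x = A⁻¹ z + μ`. By the chain rule `∇f̃(z) = (A⁻¹)ᵀ ∇f(x)`, and since `A² = Σ⁻¹`
the Gaussian density pulls back as `ρₓ(A⁻¹ z + μ) = det A · ρ_z(z)`; this factor exactly cancels
the Jacobian `|det A⁻¹|` of the substitution, so `C_z = (A⁻¹)ᵀ C A⁻¹`.
-/

open MeasureTheory Matrix

section AffineChangeOfVariables

variable {ι : Type*} [Fintype ι] [DecidableEq ι] {B : Matrix ι ι ℝ}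

lemma measurableEmbedding_mulVec_add (hB : IsUnit B.det) (μ : ι → ℝ) :
    MeasurableEmbedding (fun z => B *ᵥ z + μ) :=
  (Homeomorph.mk
    { toFun := fun z => B *ᵥ z + μ
      invFun := fun x => B⁻¹ *ᵥ (x - μ)
      left_inv := fun z => by simp [mulVec_mulVec, nonsing_inv_mul B hB]
      right_inv := fun x => by simp [mulVec_mulVec, mul_nonsing_inv B hB] }
    (by fun_prop) (by fun_prop)).measurableEmbedding

lemma map_mulVec_add_volume (hB : IsUnit B.det) (μ : ι → ℝ) :
    Measure.map (fun z => B *ᵥ z + μ) volume = ENNReal.ofReal |B.det|⁻¹ • volume := by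
  have hlin := Measure.map_linearMap_addHaar_eq_smul_addHaar (volume : Measure (ι → ℝ))
    (f := toLin' B) (by rwa [LinearMap.det_toLin', ← isUnit_iff_ne_zero])
  rw [LinearMap.det_toLin', abs_inv] at hlin
  have hcomp : (fun z => B *ᵥ z + μ) = (· + μ) ∘ toLin' B := rfl
  rw [hcomp, ← Measure.map_map (measurable_add_const μ)
    (toLin' B).continuous_of_finiteDimensional.measurable, hlin, Measure.map_smul,
    map_add_right_eq_self]

lemma integral_comp_mulVec_add (hB : IsUnit B.det) (μ : ι → ℝ) (h : (ι → ℝ) → ℝ) :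
    ∫ z, h (B *ᵥ z + μ) = |B.det|⁻¹ * ∫ x, h x := by
  rw [← (measurableEmbedding_mulVec_add hB μ).integral_map, map_mulVec_add_volume hB μ,
    integral_smul_measure, ENNReal.toReal_ofReal (by positivity), smul_eq_mul]

lemma integrable_comp_mulVec_add_iff (hB : IsUnit B.det) (μ : ι → ℝ) {h : (ι → ℝ) → ℝ} :
    Integrable (fun z => h (B *ᵥ z + μ)) ↔ Integrable h := by
  change Integrable (h ∘ fun z => B *ᵥ z + μ) ↔ _
  rw [← (measurableEmbedding_mulVec_add hB μ).integrable_map_iff, map_mulVec_add_volume hB μ,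
    integrable_smul_measure (by simpa using hB.ne_zero) ENNReal.ofReal_ne_top]

end AffineChangeOfVariables

lemma fderiv_apply_eq_sum_partialDeriv' {p : ℕ} (f : (Fin p → ℝ) → ℝ) (x v : Fin p → ℝ) :
    fderiv ℝ f x v = ∑ m, v m * partialDeriv' f m x := by
  rw [← ContinuousLinearMap.coe_coe, LinearMap.pi_apply_eq_sum_univ]
  refine Finset.sum_congr rfl fun m _ => ?_
  have hsingle : (fun j => if m = j then (1 : ℝ) else 0) = Pi.single m 1 := by
    ext j
    simp [Pi.single_apply, eq_comm]
  rw [hsingle, smul_eq_mul, ContinuousLinearMap.coe_coe, partialDeriv']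

lemma partialDeriv'_comp_mulVec_add {p : ℕ} {f : (Fin p → ℝ) → ℝ} (hf : Differentiable ℝ f)
    (B : Matrix (Fin p) (Fin p) ℝ) (μ : Fin p → ℝ) (k : Fin p) (z : Fin p → ℝ) :
    partialDeriv' (fun z => f (B *ᵥ z + μ)) k z = ∑ m, B m k * partialDeriv' f m (B *ᵥ z + μ) := by
  have hB : HasFDerivAt (fun z => B *ᵥ z + μ) (toLin' B).toContinuousLinearMap z :=
    ((toLin' B).toContinuousLinearMap.hasFDerivAt).add_const μ
  change fderiv ℝ (f ∘ fun z => B *ᵥ z + μ) z _ = _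
  rw [((hf _).hasFDerivAt.comp z hB).fderiv, ContinuousLinearMap.comp_apply,
    fderiv_apply_eq_sum_partialDeriv']
  simp

lemma Cmat_const_mul {p : ℕ} (f ρ : (Fin p → ℝ) → ℝ) (c : ℝ) :
    Cmat f (fun x => c * ρ x) = c • Cmat f ρ := by
  ext i j
  simp only [Cmat, of_apply, Matrix.smul_apply, smul_eq_mul, ← integral_const_mul]
  congr 1 with x
  ring

lemma Cmat_comp_mulVec_add {p : ℕ} {f : (Fin p → ℝ) → ℝ} (hf : Differentiable ℝ f)
    {ρ : (Fin p → ℝ) → ℝ} {B : Matrix (Fin p) (Fin p) ℝ} (hB : IsUnit B.det) (μ : Fin p → ℝ)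
    (hint : ∀ i j, Integrable fun x => partialDeriv' f i x * partialDeriv' f j x * ρ x) :
    Cmat (fun z => f (B *ᵥ z + μ)) (fun z => ρ (B *ᵥ z + μ)) =
      |B.det|⁻¹ • (Bᵀ * Cmat f ρ * B) := by
  set g : Fin p → Fin p → (Fin p → ℝ) → ℝ :=
    fun m n x => partialDeriv' f m x * partialDeriv' f n x * ρ x
  have hg : ∀ m n, Integrable fun z => g m n (B *ᵥ z + μ) :=
    fun m n => (integrable_comp_mulVec_add_iff hB μ).mpr (hint m n)
  ext k l
  calc (∫ z, partialDeriv' (fun z => f (B *ᵥ z + μ)) k z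
          * partialDeriv' (fun z => f (B *ᵥ z + μ)) l z * ρ (B *ᵥ z + μ))
      = ∫ z, ∑ m, ∑ n, B m k * B n l * g m n (B *ᵥ z + μ) := by
        congr 1 with z
        rw [partialDeriv'_comp_mulVec_add hf, partialDeriv'_comp_mulVec_add hf,
          Finset.sum_mul_sum, Finset.sum_mul]
        refine Finset.sum_congr rfl fun m _ => ?_
        rw [Finset.sum_mul]
        exact Finset.sum_congr rfl fun n _ => by ring
    _ = ∑ m, ∑ n, B m k * B n l * ∫ z, g m n (B *ᵥ z + μ) := by
        rw [integral_finsetSum _ fun m _ => integrable_finsetSum _ fun n _ => (hg m n).const_mul _]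
        refine Finset.sum_congr rfl fun m _ => ?_
        rw [integral_finsetSum _ fun n _ => (hg m n).const_mul _]
        exact Finset.sum_congr rfl fun n _ => integral_const_mul _ _
    _ = (|B.det|⁻¹ • (Bᵀ * Cmat f ρ * B)) k l := by
        simp only [integral_comp_mulVec_add hB]
        simp only [Matrix.smul_apply, mul_apply, transpose_apply, smul_eq_mul, Finset.mul_sum,
          Finset.sum_mul]
        rw [Finset.sum_comm]
        refine Finset.sum_congr rfl fun m _ => Finset.sum_congr rfl fun n _ => ?_
        simp only [Cmat, of_apply, g]
        ring

lemma det_eq_rpow_neg_half_of_mul_self_eq_inv {ι : Type*} [Fintype ι] [DecidableEq ι]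
    {A S : Matrix ι ι ℝ} (hA : 0 < A.det) (h : A * A = S⁻¹) :
    A.det = S.det ^ (-(1 : ℝ) / 2) := by
  have hsq : A.det * A.det = S.det⁻¹ := by
    rw [← det_mul, h, det_nonsing_inv, Ring.inverse_eq_inv']
  have hS : 0 < S.det := inv_pos.mp (hsq ▸ mul_pos hA hA)
  rw [neg_div, Real.rpow_neg hS.le, ← Real.inv_rpow hS.le, ← hsq, ← Real.sqrt_eq_rpow,
    Real.sqrt_mul_self hA.le]

lemma inv_mulVec_dotProduct_mulVec_inv_mulVec {ι : Type*} [Fintype ι] [DecidableEq ι]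
    {A S : Matrix ι ι ℝ} (hAT : Aᵀ = A) (hA : IsUnit A.det) (h : A * A = S⁻¹) (z : ι → ℝ) :
    (A⁻¹ *ᵥ z) ⬝ᵥ (S⁻¹ *ᵥ (A⁻¹ *ᵥ z)) = z ⬝ᵥ z := by
  rw [← h, mulVec_mulVec, Matrix.mul_assoc, mul_nonsing_inv A hA, Matrix.mul_one,
    dotProduct_mulVec, vecMul_mulVec, transpose_nonsing_inv, hAT, nonsing_inv_mul A hA, vecMul_one]

theorem Cmat_multivariate_gaussian_general {p : ℕ}
    (f : (Fin p → ℝ) → ℝ) (hf : Differentiable ℝ f)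
    (μ : Fin p → ℝ) (Sig A : Matrix (Fin p) (Fin p) ℝ)
    (hA : A.PosDef) (hA2 : A * A = Sig⁻¹)
    (ρx : (Fin p → ℝ) → ℝ)
    (hρx : ∀ x, ρx x = (2 * Real.pi) ^ (-(p : ℝ) / 2) * Sig.det ^ (-(1 : ℝ) / 2) *
        Real.exp (-((x - μ) ⬝ᵥ Sig⁻¹.mulVec (x - μ)) / 2))
    (ρz : (Fin p → ℝ) → ℝ)
    (hρz : ∀ z, ρz z = (2 * Real.pi) ^ (-(p : ℝ) / 2) * Real.exp (-(∑ i, z i ^ 2) / 2))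
    (ftil : (Fin p → ℝ) → ℝ) (hftil : ∀ z, ftil z = f (A⁻¹.mulVec z + μ))
    (hint : ∀ i j,
      Integrable (fun x => partialDeriv' f i x * partialDeriv' f j x * ρx x)) :
    Cmat f ρx = Aᵀ * Cmat ftil ρz * A := by
  have hdet : 0 < A.det := hA.det_pos
  have hunit : IsUnit A.det := hdet.ne'.isUnit
  have hAT : Aᵀ = A := by
    rw [← conjTranspose_eq_transpose_of_trivial]
    exact hA.isHermitian
  have hρz' : ρz = fun z => A.det⁻¹ * ρx (A⁻¹ *ᵥ z + μ) := by
    ext z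
    rw [hρz, hρx, add_sub_cancel_right, inv_mulVec_dotProduct_mulVec_inv_mulVec hAT hunit hA2,
      ← det_eq_rpow_neg_half_of_mul_self_eq_inv hdet hA2]
    simp only [dotProduct, ← sq]
    field_simp
  have hCz : Cmat ftil ρz = (A⁻¹)ᵀ * Cmat f ρx * A⁻¹ := by
    rw [funext hftil, hρz', Cmat_const_mul,
      Cmat_comp_mulVec_add hf (isUnit_nonsing_inv_det A hunit) μ hint, det_nonsing_inv,
      Ring.inverse_eq_inv', abs_inv, inv_inv, abs_of_pos hdet, smul_smul,
      inv_mul_cancel₀ hdet.ne', one_smul]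
  rw [hCz, ← Matrix.mul_assoc, ← Matrix.mul_assoc, ← transpose_mul, nonsing_inv_mul A hunit,
    transpose_one, Matrix.one_mul, Matrix.mul_assoc, nonsing_inv_mul A hunit, Matrix.mul_one]

theorem Cmat_multivariate_gaussian {p : ℕ} (hp : 1 ≤ p)
    (f : (Fin p → ℝ) → ℝ) (hf : Differentiable ℝ f)
    (μ : Fin p → ℝ) (Sig A : Matrix (Fin p) (Fin p) ℝ)
    (hSig : Sig.PosDef) (hA : A.PosDef) (hA2 : A * A = Sig⁻¹)
    (ρx : (Fin p → ℝ) → ℝ)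
    (hρx : ∀ x, ρx x = (2 * Real.pi) ^ (-(p : ℝ) / 2) * Sig.det ^ (-(1 : ℝ) / 2) *
        Real.exp (-((x - μ) ⬝ᵥ Sig⁻¹.mulVec (x - μ)) / 2))
    (ρz : (Fin p → ℝ) → ℝ)
    (hρz : ∀ z, ρz z = (2 * Real.pi) ^ (-(p : ℝ) / 2) * Real.exp (-(∑ i, z i ^ 2) / 2))
    (ftil : (Fin p → ℝ) → ℝ) (hftil : ∀ z, ftil z = f (A⁻¹.mulVec z + μ))
    (hint : ∀ i j,
      Integrable (fun x => partialDeriv' f i x * partialDeriv' f j x * ρx x)) :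
    Cmat f ρx = Aᵀ * Cmat ftil ρz * A :=
  Cmat_multivariate_gaussian_general f hf μ Sig A hA hA2 ρx hρx ρz hρz ftil hftil hint
end
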